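/- arXiv:1601.07747 — 11 statements merged into one kernel-verified Lean document; each statement's English description precedes it below -/
import Mathlib

section
/- Let v₁=(1,0,1), v₂=(0,1,1), v₃=(-1,0,1), v₄=(0,-1,1) in ℤ³ (type 4a). For each of the integer vectors u = (0,1,0,0), u = (1,0,0,0), and u = (1,1,0,0), there exists y ∈ ℝ³ such that uᵢ − 1 < ⟨y, vᵢ⟩ ≤ uᵢ for all i = 1,…,4. (For instance y = (1/4, 1/2, −1/4), y = (1/2, 1/4, −1/4), and y = (1/2, 1/2, 0) respectively work.) Hence the divisorial ideals T(0,1,0,0), T(1,0,0,0), T(1,1,0,0) over the toric singularity of type 4a are conic. -/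
/-- The pairing ⟨y, v⟩ = ∑ⱼ yⱼ vⱼ of a real vector y ∈ ℝ³ with an integer vector v ∈ ℤ³. -/
noncomputable def pair3 (y : Fin 3 → ℝ) (v : Fin 3 → ℤ) : ℝ :=
  ∑ j, y j * (v j : ℝ)

/-- `u ∈ ℤⁿ` is conic with respect to `v₁,…,vₙ ∈ ℤ³` if there is `y ∈ ℝ³` with
`uᵢ − 1 < ⟨y, vᵢ⟩ ≤ uᵢ` for all `i`.  By Bruns' criterion this holds iff the
divisorial ideal `T(u)` over the associated toric singularity is conic. -/
def IsConic {n : ℕ} (v : Fin n → Fin 3 → ℤ) (u : Fin n → ℤ) : Prop :=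
  ∃ y : Fin 3 → ℝ, ∀ i, (u i : ℝ) - 1 < pair3 y (v i) ∧ pair3 y (v i) ≤ (u i : ℝ)

/-- The ray generators of type 4a: v₁=(1,0,1), v₂=(0,1,1), v₃=(-1,0,1), v₄=(0,-1,1). -/
def type4a : Fin 4 → Fin 3 → ℤ :=
  ![![1, 0, 1], ![0, 1, 1], ![-1, 0, 1], ![0, -1, 1]]

theorem pair3_eq (y : Fin 3 → ℝ) (v : Fin 3 → ℤ) :
    pair3 y v = y 0 * v 0 + y 1 * v 1 + y 2 * v 2 := by
  simp [pair3, Fin.sum_univ_three]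

theorem isConic_type4a_iff (u₀ u₁ u₂ u₃ : ℤ) :
    IsConic type4a ![u₀, u₁, u₂, u₃] ↔ ∃ a b c : ℝ,
      ((u₀ : ℝ) - 1 < a + c ∧ a + c ≤ u₀) ∧ ((u₁ : ℝ) - 1 < b + c ∧ b + c ≤ u₁) ∧
      ((u₂ : ℝ) - 1 < -a + c ∧ -a + c ≤ u₂) ∧ ((u₃ : ℝ) - 1 < -b + c ∧ -b + c ≤ u₃) := by
  simp only [IsConic, Fin.forall_fin_succ, IsEmpty.forall_iff, and_true, pair3_eq]
  constructor
  · rintro ⟨y, h⟩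
    exact ⟨y 0, y 1, y 2, by simpa [type4a] using h⟩
  · rintro ⟨a, b, c, h⟩
    exact ⟨![a, b, c], by simpa [type4a] using h⟩

/-- The divisorial ideals T(0,1,0,0), T(1,0,0,0), T(1,1,0,0) of type 4a are conic. -/
theorem type4a_conics :
    IsConic type4a ![0, 1, 0, 0] ∧ IsConic type4a ![1, 0, 0, 0] ∧
      IsConic type4a ![1, 1, 0, 0] := by
  simp only [isConic_type4a_iff]
  refine ⟨⟨1/4, 1/2, -1/4, ?_⟩, ⟨1/2, 1/4, -1/4, ?_⟩, ⟨1/2, 1/2, 0, ?_⟩⟩ <;> norm_num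
end

section
/- Let v₁=(1,0,1), v₂=(0,1,1), v₃=(-1,0,1), v₄=(0,-1,1) in ℤ³ (type 4a). There is no y = (α,β,γ) ∈ ℝ³ such that ⟨y, vᵢ⟩ − uᵢ ∈ (−1, 0] for all i = 1,…,4, where u = (3,1,0,0). Equivalently, the divisorial ideal T(3,1,0,0) over the toric singularity of type 4a is not conic. (Indeed, writing εᵢ = ⟨y,vᵢ⟩ − uᵢ one would have ε₁ + ε₃ + 2 = ε₂ + ε₄, with the left side positive and the right side ≤ 0.) -/
/-!
A linear relation `v a + v b = v c + v d` among the generators forces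
`⟨y, v a⟩ + ⟨y, v b⟩ = ⟨y, v c⟩ + ⟨y, v d⟩`. Each pairing lies in `(uᵢ - 1, uᵢ]`, so the
left side exceeds `u a + u b - 2` while the right side is at most `u c + u d`; hence
`u a + u b ≤ u c + u d + 1` for a conic `u`. For type 4a, `v₁ + v₃ = v₂ + v₄`, and
`u = (3, 1, 0, 0)` violates this bound.
-/

theorem pair3_add (y : Fin 3 → ℝ) (v w : Fin 3 → ℤ) :
    pair3 y (v + w) = pair3 y v + pair3 y w := by
  simp only [pair3, Pi.add_apply, Int.cast_add, mul_add, Finset.sum_add_distrib]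

theorem IsConic.add_le_add_add_one {n : ℕ} {v : Fin n → Fin 3 → ℤ} {u : Fin n → ℤ}
    (hu : IsConic v u) {a b c d : Fin n} (hv : v a + v b = v c + v d) :
    u a + u b ≤ u c + u d + 1 := by
  obtain ⟨y, hy⟩ := hu
  have hpair : pair3 y (v a) + pair3 y (v b) = pair3 y (v c) + pair3 y (v d) := by
    rw [← pair3_add, ← pair3_add, hv]
  have hlt : (u a + u b : ℝ) < u c + u d + 2 := by
    linarith [(hy a).1, (hy b).1, (hy c).2, (hy d).2]
  have : u a + u b < u c + u d + 2 := by exact_mod_cast hlt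
  omega

theorem type4a_relation : type4a 0 + type4a 2 = type4a 1 + type4a 3 := by
  decide

theorem type4a_not_conic :
    ¬ IsConic type4a ![3, 1, 0, 0] := by
  intro h
  have := h.add_le_add_add_one type4a_relation
  simp at this
end

section
/- Let v₁=(0,1,1), v₂=(-1,0,1), v₃=(0,-1,1), v₄=(1,-1,1) in ℤ³ (type 4b). For each of the integer vectors u = (1,0,0,0), u = (2,0,0,0), and u = (3,0,0,0), there exists y ∈ ℝ³ such that uᵢ − 1 < ⟨y, vᵢ⟩ ≤ uᵢ for all i = 1,…,4. (For instance y = (1/2, 1/2, 0), y = (1/2, 5/4, 1/2), and y = (3/4, 3/2, 5/8) respectively work.) Hence the divisorial ideals T(1,0,0,0), T(2,0,0,0), T(3,0,0,0) over the toric singularity of type 4b are conic. -/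
/-- The ray generators of type 4b: v1=(0,1,1), v2=(-1,0,1), v3=(0,-1,1), v4=(1,-1,1). -/
def type4b : Fin 4 → Fin 3 → ℤ :=
  ![![0, 1, 1], ![-1, 0, 1], ![0, -1, 1], ![1, -1, 1]]

lemma pair3_vecCons (a b c : ℝ) (p q r : ℤ) :
    pair3 ![a, b, c] ![p, q, r] = a * p + b * q + c * r := by
  simp [pair3, Fin.sum_univ_three]

theorem type4b_conics :
    IsConic type4b ![1, 0, 0, 0] ∧
      IsConic type4b ![2, 0, 0, 0] ∧
      IsConic type4b ![3, 0, 0, 0] := by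
  refine ⟨⟨![1/2, 1/2, 0], ?_⟩, ⟨![1/2, 5/4, 1/2], ?_⟩, ⟨![3/4, 3/2, 5/8], ?_⟩⟩ <;>
    intro i <;> fin_cases i <;>
    norm_num [type4b, pair3_vecCons]
end

section
/- Let v₁=(1,0,1), v₂=(0,1,1), v₃=(-1,1,1), v₄=(-1,0,1), v₅=(0,-1,1) in ℤ³ (type 5a). For each of the integer vectors u = (0,1,0,0,0), (1,0,0,0,0), (1,1,0,0,0), (2,1,0,0,0), (2,2,0,0,0), (3,2,0,0,0), there exists y ∈ ℝ³ such that uᵢ − 1 < ⟨y, vᵢ⟩ ≤ uᵢ for all i = 1,…,5. (Witnesses: y = (1/8,3/8,−1/4), (1/2,1/4,−1/4), (1/2,1/2,0), (9/8,1/2,1/4), (5/4,3/4,1/2), (3/2,3/4,5/8) respectively.) Hence these six divisorial ideals over the toric singularity of type 5a are conic. -/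
/-- The ray generators of type 5a: v1=(1,0,1), v2=(0,1,1), v3=(-1,1,1), v4=(-1,0,1), v5=(0,-1,1). -/
def type5a : Fin 5 → Fin 3 → ℤ :=
  ![![1, 0, 1], ![0, 1, 1], ![-1, 1, 1], ![-1, 0, 1], ![0, -1, 1]]

theorem pair3_type5a (y : Fin 3 → ℝ) :
    (fun i => pair3 y (type5a i)) =
      ![y 0 + y 2, y 1 + y 2, -y 0 + y 1 + y 2, -y 0 + y 2, -y 1 + y 2] := by
  ext i
  fin_cases i <;> simp [pair3_eq, type5a]

theorem isConic_type5a_iff {u₁ u₂ u₃ u₄ u₅ : ℤ} :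
    IsConic type5a ![u₁, u₂, u₃, u₄, u₅] ↔ ∃ a b c : ℝ,
      (u₁ - 1 < a + c ∧ a + c ≤ u₁) ∧
      (u₂ - 1 < b + c ∧ b + c ≤ u₂) ∧
      (u₃ - 1 < -a + b + c ∧ -a + b + c ≤ u₃) ∧
      (u₄ - 1 < -a + c ∧ -a + c ≤ u₄) ∧
      (u₅ - 1 < -b + c ∧ -b + c ≤ u₅) := by
  constructor
  · rintro ⟨y, hy⟩
    refine ⟨y 0, y 1, y 2, ?_⟩
    simpa [Fin.forall_fin_succ, funext_iff.mp (pair3_type5a y)] using hy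
  · rintro ⟨a, b, c, h⟩
    refine ⟨![a, b, c], ?_⟩
    simpa [Fin.forall_fin_succ, funext_iff.mp (pair3_type5a _)] using h

theorem type5a_conics :
    IsConic type5a ![0, 1, 0, 0, 0] ∧
      IsConic type5a ![1, 0, 0, 0, 0] ∧
      IsConic type5a ![1, 1, 0, 0, 0] ∧
      IsConic type5a ![2, 1, 0, 0, 0] ∧
      IsConic type5a ![2, 2, 0, 0, 0] ∧
      IsConic type5a ![3, 2, 0, 0, 0] := by
  simp only [isConic_type5a_iff]
  refine ⟨⟨1/8, 3/8, -1/4, ?_⟩, ⟨1/2, 1/4, -1/4, ?_⟩, ⟨1/2, 1/2, 0, ?_⟩,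
    ⟨9/8, 1/2, 1/4, ?_⟩, ⟨5/4, 3/4, 1/2, ?_⟩, ⟨3/2, 3/4, 5/8, ?_⟩⟩ <;> norm_num
end

section
/- Let v₁=(1,0,1), v₂=(0,1,1), v₃=(-1,1,1), v₄=(-1,0,1), v₅=(0,-1,1) in ℤ³ (type 5a). There is no y ∈ ℝ³ such that ⟨y, vᵢ⟩ − uᵢ ∈ (−1, 0] for all i = 1,…,5, where u = (3,1,0,0,0). Equivalently, the divisorial ideal T(3,1,0,0,0) over the toric singularity of type 5a is not conic. -/
theorem not_isConic_of_add_eq_add {n : ℕ} {v : Fin n → Fin 3 → ℤ} {u : Fin n → ℤ}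
    {a b c d : Fin n} (hv : v a + v b = v c + v d) (hu : u c + u d + 2 ≤ u a + u b) :
    ¬ IsConic v u := by
  rintro ⟨y, hy⟩
  have hpair : pair3 y (v a) + pair3 y (v b) = pair3 y (v c) + pair3 y (v d) := by
    rw [← pair3_add, ← pair3_add, hv]
  have hu' : (u c : ℝ) + u d + 2 ≤ u a + u b := by exact_mod_cast hu
  linarith [(hy a).1, (hy b).1, (hy c).2, (hy d).2]

theorem type5a_not_conic :
    ¬ IsConic type5a ![3, 1, 0, 0, 0] :=
  not_isConic_of_add_eq_add (a := 0) (b := 3) (c := 1) (d := 4) (by decide) (by decide)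
end

section
/- Let v₁=(1,0,1), v₂=(0,1,1), v₃=(-1,1,1), v₄=(-1,0,1), v₅=(0,-1,1), v₆=(1,-1,1) in ℤ³ (type 6a). For each of the integer vectors u = (1,0,0,0,0,0), (0,1,0,0,0,0), (0,0,1,0,0,0), (1,1,0,0,0,0), (0,1,1,0,0,0), (1,1,1,0,0,0), (1,2,1,0,0,0), (1,2,2,0,0,0), (2,2,1,0,0,0), (2,3,2,0,0,0), (2,2,2,0,0,0), there exists y ∈ ℝ³ such that uᵢ − 1 < ⟨y, vᵢ⟩ ≤ uᵢ for all i = 1,…,6. (Witnesses: y = (1/2,1/4,−3/8), (1/4,1/2,−3/8), (−1/4,1/4,−3/8), (1/2,1/2,−1/4), (0,1/2,−1/4), (3/8,11/16,−1/4), (1/2,1,1/4), (1/2,5/4,3/8), (3/4,5/4,3/8), (3/4,3/2,5/8), (5/8,11/8,1/2) respectively.) Hence these eleven divisorial ideals over the toric singularity of type 6a are conic. -/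
/-- The ray generators of type 6a: v1=(1,0,1), v2=(0,1,1), v3=(-1,1,1), v4=(-1,0,1), v5=(0,-1,1), v6=(1,-1,1). -/
def type6a : Fin 6 → Fin 3 → ℤ :=
  ![![1, 0, 1], ![0, 1, 1], ![-1, 1, 1], ![-1, 0, 1], ![0, -1, 1], ![1, -1, 1]]

/-! The conditions `uᵢ - 1 < ⟨y, vᵢ⟩ ≤ uᵢ` only involve the numbers `⟨y, vᵢ⟩`, which are rational when
`y` is; so for a rational witness they are finitely many comparisons in `ℚ`, decided by evaluation. -/

theorem isConic_of_rat_witness {n : ℕ} {v : Fin n → Fin 3 → ℤ} {u : Fin n → ℤ} (y : Fin 3 → ℚ)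
    (hy : ∀ i, (u i : ℚ) - 1 < ∑ j, y j * v i j ∧ ∑ j, y j * v i j ≤ u i) : IsConic v u := by
  refine ⟨fun j => y j, fun i => ?_⟩
  simp only [pair3]
  exact_mod_cast hy i

theorem type6a_conics :
    IsConic type6a ![1, 0, 0, 0, 0, 0] ∧
      IsConic type6a ![0, 1, 0, 0, 0, 0] ∧
      IsConic type6a ![0, 0, 1, 0, 0, 0] ∧
      IsConic type6a ![1, 1, 0, 0, 0, 0] ∧
      IsConic type6a ![0, 1, 1, 0, 0, 0] ∧
      IsConic type6a ![1, 1, 1, 0, 0, 0] ∧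
      IsConic type6a ![1, 2, 1, 0, 0, 0] ∧
      IsConic type6a ![1, 2, 2, 0, 0, 0] ∧
      IsConic type6a ![2, 2, 1, 0, 0, 0] ∧
      IsConic type6a ![2, 3, 2, 0, 0, 0] ∧
      IsConic type6a ![2, 2, 2, 0, 0, 0] :=
  ⟨isConic_of_rat_witness ![1/2, 1/4, -3/8] (by decide +kernel),
    isConic_of_rat_witness ![1/4, 1/2, -3/8] (by decide +kernel),
    isConic_of_rat_witness ![-1/4, 1/4, -3/8] (by decide +kernel),
    isConic_of_rat_witness ![1/2, 1/2, -1/4] (by decide +kernel),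
    isConic_of_rat_witness ![0, 1/2, -1/4] (by decide +kernel),
    isConic_of_rat_witness ![3/8, 11/16, -1/4] (by decide +kernel),
    isConic_of_rat_witness ![1/2, 1, 1/4] (by decide +kernel),
    isConic_of_rat_witness ![1/2, 5/4, 3/8] (by decide +kernel),
    isConic_of_rat_witness ![3/4, 5/4, 3/8] (by decide +kernel),
    isConic_of_rat_witness ![3/4, 3/2, 5/8] (by decide +kernel),
    isConic_of_rat_witness ![5/8, 11/8, 1/2] (by decide +kernel)⟩
end

section
/- Let v₁=(1,0,1), v₂=(0,1,1), v₃=(-1,1,1), v₄=(-1,0,1), v₅=(0,-1,1), v₆=(1,-1,1) in ℤ³ (type 6a). For each of the integer vectors u = (2,3,1,0,0,0), u = (1,0,−1,0,0,0), and u = (1,3,1,0,0,0), there is no y ∈ ℝ³ such that ⟨y, vᵢ⟩ − uᵢ ∈ (−1, 0] for all i = 1,…,6. Equivalently, the divisorial ideals T(2,3,1,0,0,0), T(1,0,−1,0,0,0), T(1,3,1,0,0,0) over the toric singularity of type 6a are not conic. -/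
theorem IsConic.lt_add_two_of_add_eq {n : ℕ} {v : Fin n → Fin 3 → ℤ} {u : Fin n → ℤ}
    (hu : IsConic v u) {i j k l : Fin n} (h : v i + v j = v k + v l) :
    u k + u l < u i + u j + 2 := by
  obtain ⟨y, hy⟩ := hu
  have hsum : pair3 y (v i) + pair3 y (v j) = pair3 y (v k) + pair3 y (v l) := by
    rw [← pair3_add, ← pair3_add, h]
  have hlt : (u k + u l : ℝ) < u i + u j + 2 := by
    linarith [hy i, hy j, hy k, hy l]
  exact_mod_cast hlt

theorem not_isConic_of_add_eq {n : ℕ} {v : Fin n → Fin 3 → ℤ} {u : Fin n → ℤ} {i j k l : Fin n}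
    (h : v i + v j = v k + v l) (hu : u i + u j + 2 ≤ u k + u l) : ¬ IsConic v u :=
  fun hc => (hc.lt_add_two_of_add_eq h).not_ge hu

theorem type6a_not_conics :
    ¬ IsConic type6a ![2, 3, 1, 0, 0, 0] ∧
      ¬ IsConic type6a ![1, 0, -1, 0, 0, 0] ∧
      ¬ IsConic type6a ![1, 3, 1, 0, 0, 0] :=
  ⟨not_isConic_of_add_eq (i := 2) (j := 5) (k := 1) (l := 4) (by decide) (by decide),
    not_isConic_of_add_eq (i := 2) (j := 5) (k := 0) (l := 3) (by decide) (by decide),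
    not_isConic_of_add_eq (i := 0) (j := 3) (k := 1) (l := 4) (by decide) (by decide)⟩
end

section
/- Let v₁=(1,0,1), v₂=(0,1,1), v₃=(-1,1,1), v₄=(-1,-1,1), v₅=(0,-1,1) in ℤ³ (type 6b). There is no y ∈ ℝ³ such that ⟨y, vᵢ⟩ − uᵢ ∈ (−1, 0] for all i = 1,…,5, where u = (0,0,0,4,2). Equivalently, the divisorial ideal T(0,0,0,4,2) over the toric singularity of type 6b is not conic. -/
/-- The ray generators of type 6b: v1=(1,0,1), v2=(0,1,1), v3=(-1,1,1), v4=(-1,-1,1), v5=(0,-1,1). -/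
def type6b : Fin 5 → Fin 3 → ℤ :=
  ![![1, 0, 1], ![0, 1, 1], ![-1, 1, 1], ![-1, -1, 1], ![0, -1, 1]]


theorem IsConic.add_lt_add_add_two {n : ℕ} {v : Fin n → Fin 3 → ℤ} {u : Fin n → ℤ}
    (hu : IsConic v u) {i j k l : Fin n} (hv : v i + v j = v k + v l) :
    u i + u j < u k + u l + 2 := by
  obtain ⟨y, hy⟩ := hu
  have hpair : pair3 y (v i) + pair3 y (v j) = pair3 y (v k) + pair3 y (v l) := by
    rw [← pair3_add, ← pair3_add, hv]
  have : (u i + u j : ℝ) < u k + u l + 2 := by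
    linarith [(hy i).1, (hy j).1, (hy k).2, (hy l).2]
  exact_mod_cast this

theorem type6b_not_conic :
    ¬ IsConic type6b ![0, 0, 0, 4, 2] := by
  intro h
  have hv : type6b 1 + type6b 3 = type6b 2 + type6b 4 := by decide
  exact absurd (h.add_lt_add_add_two hv) (by decide)
end

section
/- Let v₁=(1,0,1), v₂=(0,1,1), v₃=(-2,-1,1), v₄=(0,-1,1) in ℤ³ (type 6c). For each of the integer vectors u = (0,0,0,1), (0,0,1,0), (0,0,1,1), (0,0,2,0), (0,0,2,1), there exists y ∈ ℝ³ such that uᵢ − 1 < ⟨y, vᵢ⟩ ≤ uᵢ for all i = 1,…,4. (Witnesses: y = (1/8,−3/8,−1/4), (−1/4,−1/4,−1/2), (−1/4,−1/2,−1/4), (−5/8,−1/8,−1/4), (−1/2,−1/2,−1/8) respectively.) Hence these five divisorial ideals over the toric singularity of type 6c are conic. -/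
/-- The ray generators of type 6c: v1=(1,0,1), v2=(0,1,1), v3=(-2,-1,1), v4=(0,-1,1). -/
def type6c : Fin 4 → Fin 3 → ℤ :=
  ![![1, 0, 1], ![0, 1, 1], ![-2, -1, 1], ![0, -1, 1]]

theorem isConic_iff_exists_ceil_eq {n : ℕ} (v : Fin n → Fin 3 → ℤ) (u : Fin n → ℤ) :
    IsConic v u ↔ ∃ y : Fin 3 → ℝ, ∀ i, ⌈pair3 y (v i)⌉ = u i := by
  simp only [IsConic, Int.ceil_eq_iff]

theorem pair3_type6c (y : Fin 3 → ℝ) (i : Fin 4) :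
    pair3 y (type6c i) = ![y 0 + y 2, y 1 + y 2, y 2 - 2 * y 0 - y 1, y 2 - y 1] i := by
  fin_cases i <;> simp [pair3_eq, type6c] <;> ring

theorem isConic_type6c_iff (u : Fin 4 → ℤ) :
    IsConic type6c u ↔ ∃ y : Fin 3 → ℝ,
      ⌈y 0 + y 2⌉ = u 0 ∧ ⌈y 1 + y 2⌉ = u 1 ∧ ⌈y 2 - 2 * y 0 - y 1⌉ = u 2 ∧ ⌈y 2 - y 1⌉ = u 3 := by
  simp only [isConic_iff_exists_ceil_eq, pair3_type6c, Fin.forall_fin_succ, IsEmpty.forall_iff,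
    and_true]
  rfl

theorem type6c_conics :
    IsConic type6c ![0, 0, 0, 1] ∧
      IsConic type6c ![0, 0, 1, 0] ∧
      IsConic type6c ![0, 0, 1, 1] ∧
      IsConic type6c ![0, 0, 2, 0] ∧
      IsConic type6c ![0, 0, 2, 1] := by
  simp only [isConic_type6c_iff]
  refine ⟨⟨![1/8, -3/8, -1/4], ?_⟩, ⟨![-1/4, -1/4, -1/2], ?_⟩, ⟨![-1/4, -1/2, -1/4], ?_⟩,
    ⟨![-5/8, -1/8, -1/4], ?_⟩, ⟨![-1/2, -1/2, -1/8], ?_⟩⟩ <;>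
  simp only [Matrix.cons_val] <;> norm_num
end

section
/- Let v₁=(1,0,1), v₂=(0,1,1), v₃=(-1,1,1), v₄=(-1,-1,1), v₅=(1,-1,1) in ℤ³ (type 7a). For each of the integer vectors u = (0,0,0,0,1), (0,0,0,1,0), (0,0,0,1,1), (0,0,0,2,0), (0,0,0,2,1), (0,0,0,2,2), (0,0,0,3,1), (0,0,0,3,2), (0,0,0,4,2), there exists y ∈ ℝ³ such that uᵢ − 1 < ⟨y, vᵢ⟩ ≤ uᵢ for all i = 1,…,5. (Witnesses: y = (1/8,−1/8,−1/8), (−1/2,−1/2,−3/8), (−1/4,−3/4,−1/8), (−3/4,−3/4,−1/8), (−3/8,−7/8,1/4), (−1/4,−9/8,1/4), (−3/4,−5/4,3/8), (−5/8,−11/8,1/2), (−7/8,−25/16,5/8) respectively.) Hence these nine divisorial ideals over the toric singularity of type 7a are conic. -/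
/-- The ray generators of type 7a: v1=(1,0,1), v2=(0,1,1), v3=(-1,1,1), v4=(-1,-1,1), v5=(1,-1,1). -/
def type7a : Fin 5 → Fin 3 → ℤ :=
  ![![1, 0, 1], ![0, 1, 1], ![-1, 1, 1], ![-1, -1, 1], ![1, -1, 1]]

theorem pair3_type7a (y : Fin 3 → ℝ) :
    pair3 y (type7a 0) = y 0 + y 2 ∧ pair3 y (type7a 1) = y 1 + y 2 ∧
      pair3 y (type7a 2) = -y 0 + y 1 + y 2 ∧ pair3 y (type7a 3) = -y 0 - y 1 + y 2 ∧
      pair3 y (type7a 4) = y 0 - y 1 + y 2 := by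
  refine ⟨?_, ?_, ?_, ?_, ?_⟩ <;> simp [pair3, type7a, Fin.sum_univ_three] <;> ring

theorem isConic_type7a_iff (u₁ u₂ u₃ u₄ u₅ : ℤ) :
    IsConic type7a ![u₁, u₂, u₃, u₄, u₅] ↔ ∃ a b c : ℝ,
      ((u₁ : ℝ) - 1 < a + c ∧ a + c ≤ u₁) ∧
      ((u₂ : ℝ) - 1 < b + c ∧ b + c ≤ u₂) ∧
      ((u₃ : ℝ) - 1 < -a + b + c ∧ -a + b + c ≤ u₃) ∧
      ((u₄ : ℝ) - 1 < -a - b + c ∧ -a - b + c ≤ u₄) ∧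
      ((u₅ : ℝ) - 1 < a - b + c ∧ a - b + c ≤ u₅) := by
  constructor
  · rintro ⟨y, hy⟩
    obtain ⟨h1, h2, h3, h4, h5⟩ := pair3_type7a y
    exact ⟨y 0, y 1, y 2, h1 ▸ hy 0, h2 ▸ hy 1, h3 ▸ hy 2, h4 ▸ hy 3, h5 ▸ hy 4⟩
  · rintro ⟨a, b, c, hu1, hu2, hu3, hu4, hu5⟩
    obtain ⟨h1, h2, h3, h4, h5⟩ := pair3_type7a ![a, b, c]
    refine ⟨![a, b, c], fun i => ?_⟩
    fin_cases i
    exacts [h1 ▸ hu1, h2 ▸ hu2, h3 ▸ hu3, h4 ▸ hu4, h5 ▸ hu5]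

theorem type7a_conics :
    IsConic type7a ![0, 0, 0, 0, 1] ∧
      IsConic type7a ![0, 0, 0, 1, 0] ∧
      IsConic type7a ![0, 0, 0, 1, 1] ∧
      IsConic type7a ![0, 0, 0, 2, 0] ∧
      IsConic type7a ![0, 0, 0, 2, 1] ∧
      IsConic type7a ![0, 0, 0, 2, 2] ∧
      IsConic type7a ![0, 0, 0, 3, 1] ∧
      IsConic type7a ![0, 0, 0, 3, 2] ∧
      IsConic type7a ![0, 0, 0, 4, 2] := by
  simp only [isConic_type7a_iff]
  exact ⟨⟨1/8, -1/8, -1/8, by norm_num⟩, ⟨-1/2, -1/2, -3/8, by norm_num⟩,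
    ⟨-1/4, -3/4, -1/8, by norm_num⟩, ⟨-3/4, -3/4, -1/8, by norm_num⟩,
    ⟨-3/8, -7/8, 1/4, by norm_num⟩, ⟨-1/4, -9/8, 1/4, by norm_num⟩,
    ⟨-3/4, -5/4, 3/8, by norm_num⟩, ⟨-5/8, -11/8, 1/2, by norm_num⟩,
    ⟨-7/8, -25/16, 5/8, by norm_num⟩⟩
end

section
/- Let v₁=(1,0,1), v₂=(0,1,1), v₃=(-1,1,1), v₄=(-1,-1,1), v₅=(1,-1,1) in ℤ³ (type 7a). For each of the integer vectors u = (0,0,0,1,−1) and u = (0,0,0,4,1), there is no y ∈ ℝ³ such that ⟨y, vᵢ⟩ − uᵢ ∈ (−1, 0] for all i = 1,…,5. Equivalently, the divisorial ideals T(0,0,0,1,−1) and T(0,0,0,4,1) over the toric singularity of type 7a are not conic. -/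
theorem pair3_sum_smul {n : ℕ} (y : Fin 3 → ℝ) (c : Fin n → ℤ) (v : Fin n → Fin 3 → ℤ) :
    pair3 y (∑ i, c i • v i) = ∑ i, (c i : ℝ) * pair3 y (v i) := by
  simp only [pair3, Finset.sum_apply, Pi.smul_apply, smul_eq_mul, Int.cast_sum, Int.cast_mul,
    Finset.mul_sum]
  rw [Finset.sum_comm]
  exact Finset.sum_congr rfl fun _ _ => Finset.sum_congr rfl fun _ _ => by ring

theorem IsConic.exists_sum_mul_eq_zero {n : ℕ} {v : Fin n → Fin 3 → ℤ} {u : Fin n → ℤ}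
    (h : IsConic v u) (c : Fin n → ℤ) (hc : ∑ i, c i • v i = 0) :
    ∃ f : Fin n → ℝ, (∀ i, (u i : ℝ) - 1 < f i ∧ f i ≤ u i) ∧ ∑ i, (c i : ℝ) * f i = 0 := by
  obtain ⟨y, hy⟩ := h
  refine ⟨fun i => pair3 y (v i), hy, ?_⟩
  rw [← pair3_sum_smul, hc]
  simp [pair3]

theorem type7a_not_conics :
    ¬ IsConic type7a ![0, 0, 0, 1, -1] ∧
      ¬ IsConic type7a ![0, 0, 0, 4, 1] := by
  constructor
  · intro h
    obtain ⟨f, hf, hsum⟩ := h.exists_sum_mul_eq_zero ![2, 0, -1, 1, -2] (by decide)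
    have hrel : 2 * f 0 - f 2 + f 3 - 2 * f 4 = 0 := by
      simpa [Fin.sum_univ_five, sub_eq_add_neg] using hsum
    have h₁ : -1 < f 0 := by simpa using (hf 0).1
    have h₃ : f 2 ≤ 0 := by simpa using (hf 2).2
    have h₄ : 0 < f 3 := by simpa using (hf 3).1
    have h₅ : f 4 ≤ -1 := by simpa using (hf 4).2
    linarith
  · intro h
    obtain ⟨f, hf, hsum⟩ := h.exists_sum_mul_eq_zero ![0, -2, 2, -1, 1] (by decide)
    have hrel : -2 * f 1 + 2 * f 2 - f 3 + f 4 = 0 := by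
      simpa [Fin.sum_univ_five, sub_eq_add_neg] using hsum
    have h₂ : -1 < f 1 := by simpa using (hf 1).1
    have h₃ : f 2 ≤ 0 := by simpa using (hf 2).2
    have h₄ : 4 - 1 < f 3 := by simpa using (hf 3).1
    have h₅ : f 4 ≤ 1 := by simpa using (hf 4).2
    linarith
end
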